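/- Let n ≥ 0 and let G ∈ 𝒜ₙ contain a minimum restraining set of size r (a set S of r vertices that is (r, r+n)-restraining, with r+n minimal over all restraining sets with excess n). Then for every graph H, γ(G □ H) ≥ (γ(G) − r)·γ(H). -/

import Mathlib

open Finset

/-- `S` dominates `T`: every vertex of `T` is in the closed neighborhood of `S`. -/
def Dominates {V : Type*} (G : SimpleGraph V) (S T : Set V) : Prop :=
  ∀ t ∈ T, ∃ s ∈ S, s = t ∨ G.Adj s t

/-- The domination number of a finite graph. -/
noncomputable def domNum {V : Type*} [Fintype V] (G : SimpleGraph V) : ℕ :=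
  sInf {n | ∃ D : Finset V, D.card = n ∧ Dominates G ↑D Set.univ}

/-- A partition of the vertex set of `G` into `m` cliques. -/
structure CliquePartition {V : Type*} (G : SimpleGraph V) (m : ℕ) where
  parts : Fin m → Finset V
  disj : ∀ i j, i ≠ j → Disjoint (parts i) (parts j)
  cover : ∀ v, ∃ i, v ∈ parts i
  clique : ∀ i, G.IsClique ↑(parts i)

/-- The clique covering number: minimum number of cliques partitioning `V(G)`. -/
noncomputable def cliqueCoverNum {V : Type*} [Fintype V] (G : SimpleGraph V) : ℕ :=
  sInf {m | Nonempty (CliquePartition G m)}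

/-- The class `𝒟ₙ`: `θ(G) = γ(G) + n` and `G` is not a spanning subgraph
(with equal domination number) of a graph in `𝒟ₘ` for `m < n`. -/
def InD {V : Type*} [Fintype V] (n : ℕ) (G : SimpleGraph V) : Prop :=
  cliqueCoverNum G = domNum G + n ∧
    ∀ m : ℕ, m < n → ∀ H : SimpleGraph V, G ≤ H → domNum G = domNum H → ¬ InD m H
termination_by n

/-- The class `𝒜ₙ`: spanning subgraphs (with equal domination number) of graphs in `𝒟ₙ`. -/
def InA {V : Type*} [Fintype V] (n : ℕ) (G : SimpleGraph V) : Prop :=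
  ∃ H : SimpleGraph V, G ≤ H ∧ domNum G = domNum H ∧ InD n H

/-- `S` is restraining with avoided-and-dominated cliques indexed by `L` and met
cliques indexed by `T` (so `S` is `(|S|, |L|+|T|)`-restraining; its restraint is
`|L| + |T|` and its excess `|L| + |T| − |S|`). -/
def IsRestrainingOn {V : Type*} [DecidableEq V] {G : SimpleGraph V} {m : ℕ}
    (P : CliquePartition G m) (S : Finset V) (L T : Finset (Fin m)) : Prop :=
  Disjoint L T ∧
  (∀ i ∈ L, Disjoint S (P.parts i)) ∧
  Dominates G ↑S ↑(L.biUnion P.parts) ∧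
  (S ⊆ T.biUnion P.parts) ∧
  (∀ i ∈ T, (P.parts i ∩ S).Nonempty)

/-! A clique partition of `G'` into `m` parts lets every set `D` dominate at most
`|D| + m - γ(G')` parts, and `S` attains this bound. Hence, for a minimum dominating set `D` of
`G □ H`, each fibre `D_w = {v | (v, w) ∈ D}` dominates at most `|D_w|` of the `γ(G) - r` parts
outside `L ∪ T`. Conversely, for each such part `C` the layers `w` whose fibre dominates `C` form a
dominating set of `H`: a vertex of `C × {w}` that is not dominated inside its layer is dominated
from a neighbouring layer `w'`, whose fibre then meets the clique `C`. Double counting the pairs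
(part, layer) gives `(γ(G) - r) γ(H) ≤ |D|`. -/

lemma domNum_le_card {V : Type*} [Fintype V] {G : SimpleGraph V} {D : Finset V}
    (h : Dominates G ↑D Set.univ) : domNum G ≤ #D :=
  Nat.sInf_le ⟨D, rfl, h⟩

lemma exists_card_eq_domNum {V : Type*} [Fintype V] (G : SimpleGraph V) :
    ∃ D : Finset V, #D = domNum G ∧ Dominates G ↑D Set.univ :=
  Nat.sInf_mem (s := {n | ∃ D : Finset V, #D = n ∧ Dominates G ↑D Set.univ})
    ⟨_, univ, rfl, fun t _ => ⟨t, mem_coe.2 (mem_univ t), .inl rfl⟩⟩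

lemma Dominates.mono {V : Type*} {G G' : SimpleGraph V} {D D' T : Set V}
    (h : Dominates G D T) (hD : D ⊆ D') (hG : G ≤ G') : Dominates G' D' T := fun t ht =>
  let ⟨s, hs, hst⟩ := h t ht
  ⟨s, hD hs, hst.imp_right (@hG s t)⟩

lemma SimpleGraph.IsClique.dominates_of_mem {V : Type*} {G : SimpleGraph V} {C D : Set V}
    (hC : G.IsClique C) {s : V} (hsC : s ∈ C) (hsD : s ∈ D) : Dominates G D C := fun t ht =>
  ⟨s, hsD, (eq_or_ne s t).imp_right (hC hsC ht)⟩

namespace CliquePartition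

variable {V : Type*} {G : SimpleGraph V} {m : ℕ} (P : CliquePartition G m)

open scoped Classical in
noncomputable def dominatedParts (D : Finset V) : Finset (Fin m) :=
  {i | Dominates G ↑D ↑(P.parts i)}

lemma mem_dominatedParts {D : Finset V} {i : Fin m} :
    i ∈ P.dominatedParts D ↔ Dominates G ↑D ↑(P.parts i) := by
  simp [dominatedParts]

lemma dominatedParts_mono {D D' : Finset V} (h : D ⊆ D') :
    P.dominatedParts D ⊆ P.dominatedParts D' := fun _ hi =>
  (P.mem_dominatedParts.2 ((P.mem_dominatedParts.1 hi).mono (coe_subset.2 h) le_rfl))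

-- `D` together with one vertex from every part it does not dominate dominates `G`.
lemma domNum_add_card_dominatedParts_le [Fintype V] (D : Finset V) :
    domNum G + #(P.dominatedParts D) ≤ #D + m := by
  classical
  set U := (P.dominatedParts D)ᶜ
  have hne : ∀ i ∈ U, (P.parts i).Nonempty := fun i hi => by
    by_contra h
    rw [not_nonempty_iff_eq_empty] at h
    exact mem_compl.1 hi (P.mem_dominatedParts.2 (by simp [h, Dominates]))
  choose v hv using hne
  set E := D ∪ U.attach.image fun i => v i.1 i.2
  have hE : Dominates G ↑E Set.univ := by
    intro x _
    obtain ⟨i, hxi⟩ := P.cover x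
    by_cases hi : i ∈ P.dominatedParts D
    · exact (P.mem_dominatedParts.1 hi).mono (coe_subset.2 subset_union_left) le_rfl x hxi
    · have hiU : i ∈ U := mem_compl.2 hi
      refine (P.clique i).dominates_of_mem (hv i hiU) ?_ x hxi
      exact mem_coe.2 (mem_union_right _ (mem_image.2 ⟨⟨i, hiU⟩, mem_attach _ _, rfl⟩))
  have hEcard : #E ≤ #D + (m - #(P.dominatedParts D)) := calc
    #E ≤ #D + #(U.attach.image fun i => v i.1 i.2) := card_union_le _ _
    _ ≤ #D + #U := by grw [card_image_le, card_attach]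
    _ = #D + (m - #(P.dominatedParts D)) := by rw [card_compl, Fintype.card_fin]
  have := card_le_univ (P.dominatedParts D)
  rw [Fintype.card_fin] at this
  have := domNum_le_card hE
  omega

end CliquePartition

section Restraining

variable {V : Type*} [DecidableEq V] {G : SimpleGraph V} {m : ℕ}
  {P : CliquePartition G m} {S : Finset V} {L T : Finset (Fin m)}

lemma IsRestrainingOn.subset_dominatedParts (hS : IsRestrainingOn P S L T) :
    L ∪ T ⊆ P.dominatedParts S := by
  obtain ⟨-, -, hL, -, hT⟩ := hS
  intro i hi
  rw [P.mem_dominatedParts]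
  rcases mem_union.1 hi with hiL | hiT
  · exact fun t ht => hL t (by simpa using ⟨i, hiL, ht⟩)
  · obtain ⟨s, hs⟩ := hT i hiT
    rw [mem_inter] at hs
    exact (P.clique i).dominates_of_mem hs.1 hs.2

-- By `domNum_add_card_dominatedParts_le` the excess of `S` is at most `m - γ(G)`; when it is
-- attained, adding `D` to `S` cannot dominate more new parts than it adds vertices.
lemma IsRestrainingOn.card_dominatedParts_sdiff_le [Fintype V] (hS : IsRestrainingOn P S L T)
    (hmax : #S + m ≤ domNum G + (#L + #T)) (D : Finset V) :
    #(P.dominatedParts D \ (L ∪ T)) ≤ #D := by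
  have hLT : #(L ∪ T) = #L + #T := card_union_of_disjoint hS.1
  have hsub : P.dominatedParts D ∪ (L ∪ T) ⊆ P.dominatedParts (S ∪ D) :=
    union_subset (P.dominatedParts_mono subset_union_right)
      (hS.subset_dominatedParts.trans (P.dominatedParts_mono subset_union_left))
  have := card_le_card hsub
  have := P.domNum_add_card_dominatedParts_le (S ∪ D)
  have := card_union_le S D
  have := card_sdiff_add_card (P.dominatedParts D) (L ∪ T)
  omega

end Restraining

section BoxProd

variable {V W : Type*}

noncomputable def fiber (D : Finset (V × W)) (w : W) : Finset V :=
  D.preimage (·, w) (Prod.mk_left_injective w).injOn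

@[simp]
lemma mem_fiber {D : Finset (V × W)} {w : W} {v : V} : v ∈ fiber D w ↔ (v, w) ∈ D :=
  mem_preimage

lemma sum_card_fiber [Fintype W] (D : Finset (V × W)) :
    ∑ w, #(fiber D w) = #D := by
  classical
  rw [card_eq_sum_card_fiberwise (f := Prod.snd) (t := univ) fun _ _ => mem_coe.2 (mem_univ _)]
  refine sum_congr rfl fun w _ => ?_
  rw [fiber, card_preimage]
  congr 1
  ext ⟨v, w'⟩
  simp [eq_comm]

lemma dominates_setOf_dominates_fiber {G G' : SimpleGraph V} {H : SimpleGraph W} (hG : G ≤ G')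
    {C : Finset V} (hC : G'.IsClique ↑C) {D : Finset (V × W)}
    (hD : Dominates (G □ H) ↑D Set.univ) :
    Dominates H {w | Dominates G' ↑(fiber D w) ↑C} Set.univ := by
  intro w _
  by_cases hw : Dominates G' ↑(fiber D w) ↑C
  · exact ⟨w, hw, .inl rfl⟩
  simp only [Dominates, not_forall, not_exists, not_or, not_and] at hw
  obtain ⟨v, hvC, hv⟩ := hw
  obtain ⟨⟨s, w'⟩, hsD, hsv⟩ := hD (v, w) trivial
  rcases hsv with hsv | hsv
  · obtain ⟨rfl, rfl⟩ := Prod.mk.inj hsv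
    exact absurd rfl (hv s (mem_fiber.2 hsD)).1
  rcases SimpleGraph.boxProd_adj.1 hsv with ⟨hGsv, rfl⟩ | ⟨hHw, rfl⟩
  · exact absurd (hG hGsv) (hv s (mem_fiber.2 hsD)).2
  · exact ⟨w', hC.dominates_of_mem hvC (mem_fiber.2 hsD), .inr hHw⟩

end BoxProd

theorem IsRestrainingOn.mul_domNum_le_domNum_boxProd {V : Type*} [Fintype V] [DecidableEq V]
    {G G' : SimpleGraph V} (hG : G ≤ G') {m : ℕ} {P : CliquePartition G' m} {S : Finset V}
    {L T : Finset (Fin m)} (hS : IsRestrainingOn P S L T)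
    (hmax : #S + m ≤ domNum G' + (#L + #T)) {W : Type*} [Fintype W] (H : SimpleGraph W) :
    (m - #(L ∪ T)) * domNum H ≤ domNum (G □ H) := by
  classical
  obtain ⟨D, hDcard, hD⟩ := exists_card_eq_domNum (G □ H)
  calc (m - #(L ∪ T)) * domNum H = ∑ _ ∈ (L ∪ T)ᶜ, domNum H := by
        rw [sum_const, card_compl, Fintype.card_fin, smul_eq_mul]
    _ ≤ ∑ i ∈ (L ∪ T)ᶜ, #{w | i ∈ P.dominatedParts (fiber D w)} := sum_le_sum fun i _ =>
        domNum_le_card (by simpa [P.mem_dominatedParts] using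
          dominates_setOf_dominates_fiber hG (P.clique i) hD)
    _ = ∑ w, #{i ∈ (L ∪ T)ᶜ | i ∈ P.dominatedParts (fiber D w)} :=
        sum_card_bipartiteAbove_eq_sum_card_bipartiteBelow _
    _ = ∑ w, #(P.dominatedParts (fiber D w) \ (L ∪ T)) := by
        congr! 2 with w
        ext i
        simp [and_comm]
    _ ≤ ∑ w, #(fiber D w) := sum_le_sum fun w _ => hS.card_dominatedParts_sdiff_le hmax _
    _ = domNum (G □ H) := by rw [sum_card_fiber, hDcard]

theorem stmt16_general {V : Type*} [Fintype V] [DecidableEq V] (n r : ℕ)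
    (G : SimpleGraph V)
    (G' : SimpleGraph V) (hsub : G ≤ G') (hγ : domNum G = domNum G')
    (P : CliquePartition G' (domNum G' + n))
    (S : Finset V) (L T : Finset (Fin (domNum G' + n)))
    (hS : IsRestrainingOn P S L T) (hScard : S.card = r)
    (hrestraint : L.card + T.card = r + n) :
    ∀ (W : Type) [Fintype W] (H : SimpleGraph W),
      domNum (G.boxProd H) ≥ (domNum G - r) * domNum H := by
  intro W _ H
  have hmax : #S + (domNum G' + n) ≤ domNum G' + (#L + #T) := by omega
  have hLT : #(L ∪ T) = r + n := by rw [card_union_of_disjoint hS.1, hrestraint]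
  have := hS.mul_domNum_le_domNum_boxProd hsub hmax H
  rwa [hLT, ← hγ, Nat.add_sub_add_right] at this

/-- Corollary: if `G ∈ 𝒜ₙ` (via a supergraph `G' ∈ 𝒟ₙ` with clique partition into
`γ + n` cliques) contains a minimum restraining set of size `r` (an `(r, r+n)`-restraining
set with minimum restraint over all restraining sets with excess `n`), then
`γ(G □ H) ≥ (γ(G) − r)·γ(H)` for every graph `H`. -/
theorem stmt16 {V : Type*} [Fintype V] [DecidableEq V] (n r : ℕ)
    (G : SimpleGraph V) (hG : InA n G)
    (G' : SimpleGraph V) (hsub : G ≤ G') (hγ : domNum G = domNum G') (hG' : InD n G')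
    (P : CliquePartition G' (domNum G' + n))
    (S : Finset V) (L T : Finset (Fin (domNum G' + n)))
    (hS : IsRestrainingOn P S L T) (hScard : S.card = r)
    (hrestraint : L.card + T.card = r + n)
    (hmin : ∀ (S' : Finset V) (L' T' : Finset (Fin (domNum G' + n))),
      IsRestrainingOn P S' L' T' → L'.card + T'.card = S'.card + n →
      r + n ≤ L'.card + T'.card) :
    ∀ (W : Type) [Fintype W] (H : SimpleGraph W),
      domNum (G.boxProd H) ≥ (domNum G - r) * domNum H :=
  stmt16_general n r G G' hsub hγ P S L T hS hScard hrestraint
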